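/- If two states are related by some symmetric relation satisfying conditions (T) and (D₄), then they are related by some symmetric relation satisfying conditions (T) and (D₃). Consequently the equivalences ≈₄ and ≈₃ coincide, and so do the equivalences induced by conditions (D), (D₁), (D₂), (D₃) and (D₄) combined with (T). -/
import Mathlib


universe u

section BB

variable {S A : Type}

/-- Reflexive-transitive closure of τ-transitions: s ⇒ s'. -/
def Taus (Tr : S → A → S → Prop) (τ : A) : S → S → Prop :=
  Relation.ReflTransGen (fun s s' => Tr s τ s')

/-- One or more τ-transitions: s ⇒⁺ s'. -/
def TausPlus (Tr : S → A → S → Prop) (τ : A) : S → S → Prop :=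
  Relation.TransGen (fun s s' => Tr s τ s')

/-- Optional step s →(a) s'. -/
def OptStep (Tr : S → A → S → Prop) (τ : A) (a : A) (s s' : S) : Prop :=
  Tr s a s' ∨ (a = τ ∧ s = s')

/-- Condition (T): branching-bisimulation transfer condition. -/
def CondT (Tr : S → A → S → Prop) (τ : A) (R : S → S → Prop) : Prop :=
  ∀ s t a s', R s t → Tr s a s' →
    ∃ t'' t', Taus Tr τ t t'' ∧ OptStep Tr τ a t'' t' ∧ R s t'' ∧ R s' t'

/-- Condition (D): full mutually related divergence. -/
def CondD (Tr : S → A → S → Prop) (τ : A) (R : S → S → Prop) : Prop :=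
  ∀ s t (f : ℕ → S), R s t → f 0 = s → (∀ k, Tr (f k) τ (f (k + 1))) →
    (∀ k, R (f k) t) →
    ∃ g : ℕ → S, g 0 = t ∧ (∀ l, Tr (g l) τ (g (l + 1))) ∧ ∀ k l, R (f k) (g l)

/-- Condition (D₁): one-step divergence simulation with related divergence. -/
def CondD1 (Tr : S → A → S → Prop) (τ : A) (R : S → S → Prop) : Prop :=
  ∀ s t (f : ℕ → S), R s t → f 0 = s → (∀ k, Tr (f k) τ (f (k + 1))) →
    (∀ k, R (f k) t) →
    ∃ t' k, Tr t τ t' ∧ R (f k) t'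

/-- Condition (D₂): single τ-step divergence simulation of arbitrary divergences. -/
def CondD2 (Tr : S → A → S → Prop) (τ : A) (R : S → S → Prop) : Prop :=
  ∀ s t (f : ℕ → S), R s t → f 0 = s → (∀ k, Tr (f k) τ (f (k + 1))) →
    ∃ t' k, Tr t τ t' ∧ R (f k) t'

/-- Condition (D₃): full divergence simulation with a mapping σ. -/
def CondD3 (Tr : S → A → S → Prop) (τ : A) (R : S → S → Prop) : Prop :=
  ∀ s t (f : ℕ → S), R s t → f 0 = s → (∀ k, Tr (f k) τ (f (k + 1))) →
    ∃ (g : ℕ → S) (σ : ℕ → ℕ), g 0 = t ∧ (∀ l, Tr (g l) τ (g (l + 1))) ∧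
      ∀ l, R (f (σ l)) (g l)

/-- Condition (D₄): reach via ⇒⁺ a state related to some state on the divergence. -/
def CondD4 (Tr : S → A → S → Prop) (τ : A) (R : S → S → Prop) : Prop :=
  ∀ s t (f : ℕ → S), R s t → f 0 = s → (∀ k, Tr (f k) τ (f (k + 1))) →
    (∀ k, R (f k) t) →
    ∃ t' k, TausPlus Tr τ t t' ∧ R (f k) t'

/-- s ≈₃ t. -/
def Approx3 (Tr : S → A → S → Prop) (τ : A) (s t : S) : Prop :=
  ∃ R : S → S → Prop, Symmetric R ∧ CondT Tr τ R ∧ CondD3 Tr τ R ∧ R s t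

/-- s ≈₄ t. -/
def Approx4 (Tr : S → A → S → Prop) (τ : A) (s t : S) : Prop :=
  ∃ R : S → S → Prop, Symmetric R ∧ CondT Tr τ R ∧ CondD4 Tr τ R ∧ R s t

/-- s ≈₁ t. -/
def Approx1 (Tr : S → A → S → Prop) (τ : A) (s t : S) : Prop :=
  ∃ R : S → S → Prop, Symmetric R ∧ CondT Tr τ R ∧ CondD1 Tr τ R ∧ R s t

/-- s ≈₂ t. -/
def Approx2 (Tr : S → A → S → Prop) (τ : A) (s t : S) : Prop :=
  ∃ R : S → S → Prop, Symmetric R ∧ CondT Tr τ R ∧ CondD2 Tr τ R ∧ R s t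

/-- Branching bisimilarity with explicit divergence (conditions (T) and (D)). -/
def BBED (Tr : S → A → S → Prop) (τ : A) (s t : S) : Prop :=
  ∃ R : S → S → Prop, Symmetric R ∧ CondT Tr τ R ∧ CondD Tr τ R ∧ R s t

/-- Stuttering closure of a binary relation. -/
def StutClos (Tr : S → A → S → Prop) (τ : A) (R : S → S → Prop) (s t : S) : Prop :=
  ∃ sm sp tm tp, Taus Tr τ sm s ∧ Taus Tr τ s sp ∧ Taus Tr τ tm t ∧ Taus Tr τ t tp ∧
    R sm tp ∧ R sp tm

end BB

section Aux

variable {S A : Type}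

/-- A τ-path from `a` to `b` all of whose states strictly after `a` satisfy `Q`. -/
inductive QPath (Tr : S → A → S → Prop) (τ : A) (Q : S → Prop) : S → S → Prop
  | refl (a : S) : QPath Tr τ Q a a
  | head {a b c : S} : Tr a τ b → Q b → QPath Tr τ Q b c → QPath Tr τ Q a c

lemma qpath_snoc {Tr : S → A → S → Prop} {τ : A} {Q : S → Prop} {a b c : S}
    (h : QPath Tr τ Q a b) (hbc : Tr b τ c) (hQc : Q c) : QPath Tr τ Q a c := by
  induction h with
  | refl a => exact QPath.head hbc hQc (QPath.refl c)
  | head hab hQ _ ih => exact QPath.head hab hQ (ih hbc)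

lemma taus_refl {Tr : S → A → S → Prop} {τ : A} {a : S} : Taus Tr τ a a :=
  Relation.ReflTransGen.refl

lemma taus_single {Tr : S → A → S → Prop} {τ : A} {a b : S} (h : Tr a τ b) : Taus Tr τ a b :=
  Relation.ReflTransGen.single h

lemma taus_trans {Tr : S → A → S → Prop} {τ : A} {a b c : S} (h : Taus Tr τ a b)
    (h' : Taus Tr τ b c) : Taus Tr τ a c :=
  Relation.ReflTransGen.trans h h'

lemma taus_head {Tr : S → A → S → Prop} {τ : A} {a b c : S} (h : Tr a τ b)
    (h' : Taus Tr τ b c) : Taus Tr τ a c :=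
  Relation.ReflTransGen.head h h'

lemma qpath_of_taus {Tr : S → A → S → Prop} {τ : A} {Q : S → Prop} {a b : S}
    (h : Taus Tr τ a b) (hQ : ∀ x, Taus Tr τ a x → Taus Tr τ x b → Q x) :
    QPath Tr τ Q a b := by
  induction h using Relation.ReflTransGen.head_induction_on with
  | refl => exact QPath.refl b
  | head h' hrest ih =>
    exact QPath.head h' (hQ _ (taus_single h') hrest)
      (ih fun x hx hxb => hQ x (taus_head h' hx) hxb)

/-- Transfer along a sequence of τ-steps, for a relation satisfying (T). -/
lemma condT_taus {Tr : S → A → S → Prop} {τ : A} {R : S → S → Prop}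
    (hT : CondT Tr τ R) {s s' : S} (h : Taus Tr τ s s') :
    ∀ t, R s t → ∃ t', Taus Tr τ t t' ∧ R s' t' := by
  induction h using Relation.ReflTransGen.head_induction_on with
  | refl => exact fun t ht => ⟨t, taus_refl, ht⟩
  | head h' hrest ih =>
    intro t ht
    obtain ⟨t'', t', htt'', hopt, _, hR'⟩ := hT _ _ _ _ ht h'
    have htt' : Taus Tr τ t t' := by
      rcases hopt with hstep | ⟨_, heq⟩
      · exact taus_trans htt'' (taus_single hstep)
      · exact heq ▸ htt''
    obtain ⟨t2, ht2, hR2⟩ := ih t' hR'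
    exact ⟨t2, taus_trans htt' ht2, hR2⟩

lemma r_subset_stutclos {Tr : S → A → S → Prop} {τ : A} {R : S → S → Prop} {s t : S}
    (h : R s t) : StutClos Tr τ R s t :=
  ⟨s, s, t, t, taus_refl, taus_refl, taus_refl, taus_refl, h, h⟩

lemma stutclos_symm {Tr : S → A → S → Prop} {τ : A} {R : S → S → Prop}
    (hsym : Symmetric R) : Symmetric (StutClos Tr τ R) := by
  rintro s t ⟨sm, sp, tm, tp, h1, h2, h3, h4, h5, h6⟩
  exact ⟨tm, tp, sm, sp, h3, h4, h1, h2, hsym h6, hsym h5⟩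

lemma stutclos_condT {Tr : S → A → S → Prop} {τ : A} {R : S → S → Prop}
    (hT : CondT Tr τ R) : CondT Tr τ (StutClos Tr τ R) := by
  rintro s t a s' ⟨sm, sp, tm, tp, h1, h2, h3, h4, h5, h6⟩ hstep
  obtain ⟨u, htpu, hsu⟩ := condT_taus hT h1 tp h5
  obtain ⟨u'', u', huu'', hopt, hsu'', hs'u'⟩ := hT _ _ _ _ hsu hstep
  exact ⟨u'', u', taus_trans h4 (taus_trans htpu huu''), hopt,
    r_subset_stutclos hsu'', r_subset_stutclos hs'u'⟩

lemma stutclos_condD3 {Tr : S → A → S → Prop} {τ : A} {R : S → S → Prop}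
    (hT : CondT Tr τ R) (hD4 : CondD4 Tr τ R) : CondD3 Tr τ (StutClos Tr τ R) := by
  intro s t f hst hf0 hstep
  subst hf0
  obtain ⟨sm, sp, tm, tp, h1, h2, h3, h4, h5, h6⟩ := hst
  classical
  set Q : S → Prop := fun x => ∃ j, StutClos Tr τ R (f j) x with hQdef
  obtain ⟨u, htpu, hsu⟩ := condT_taus hT h1 tp h5
  -- `Inv v`: there is a Q-path from v to a state related to some state of the divergence
  set Inv : S → Prop := fun v => ∃ w k, QPath Tr τ Q v w ∧ R (f k) w with hInvdef
  -- the segment lemma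
  have seg : ∀ (k : ℕ) (v : S), R (f k) v → ∃ v', Tr v τ v' ∧ Q v' ∧ Inv v' := by
    intro k v hRkv
    by_cases hA : ∀ i, R (f (k + i)) v
    · obtain ⟨v', j, hplus, hR'⟩ :=
        hD4 (f k) v (fun i => f (k + i)) hRkv rfl (fun i => hstep (k + i)) hA
      obtain ⟨c, hvc, hcv'⟩ := Relation.TransGen.head'_iff.mp hplus
      have hQmid : ∀ x, Taus Tr τ v x → Taus Tr τ x v' → Q x := fun x hx hx' =>
        ⟨k + j, f (k + j), f (k + j), v, v', taus_refl, taus_refl, hx, hx', hR', hA j⟩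
      exact ⟨c, hvc, hQmid c (taus_single hvc) hcv',
        v', k + j, qpath_of_taus hcv' (fun x hcx hxv' =>
          hQmid x (taus_trans (taus_single hvc) hcx) hxv'), hR'⟩
    · push_neg at hA
      have h0 : Nat.find hA ≠ 0 := by
        intro h
        have := Nat.find_spec hA
        rw [h] at this
        exact this hRkv
      obtain ⟨m, hm⟩ := Nat.exists_eq_succ_of_ne_zero h0
      have hRm : R (f (k + m)) v := by
        have := Nat.find_min hA (m := m) (hm ▸ Nat.lt_succ_self m)
        exact not_not.mp this
      have hnot : ¬ R (f (k + m + 1)) v := by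
        have := Nat.find_spec hA
        rw [hm] at this
        exact this
      obtain ⟨u'', u', hvu'', hopt, hRmu'', hRm1u'⟩ :=
        hT (f (k + m)) v τ (f (k + m + 1)) hRm (hstep (k + m))
      have hQmid : ∀ x, Taus Tr τ v x → Taus Tr τ x u'' → Q x := fun x hx hx' =>
        ⟨k + m, f (k + m), f (k + m), v, u'', taus_refl, taus_refl, hx, hx', hRmu'', hRm⟩
      rcases hopt with hstep'' | ⟨_, heq⟩
      · -- actual step u'' →τ u'
        have hQu' : Q u' := ⟨k + m + 1, f (k + m + 1), f (k + m + 1), u', u',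
          taus_refl, taus_refl, taus_refl, taus_refl, hRm1u', hRm1u'⟩
        rcases Relation.ReflTransGen.cases_head hvu'' with heq2 | ⟨c, hvc, hcu''⟩
        · exact ⟨u', heq2 ▸ hstep'', hQu', u', k + m + 1, QPath.refl u', hRm1u'⟩
        · exact ⟨c, hvc, hQmid c (taus_single hvc) hcu'', u', k + m + 1,
            qpath_snoc (qpath_of_taus hcu'' (fun x hcx hx' =>
              hQmid x (taus_trans (taus_single hvc) hcx) hx')) hstep'' hQu', hRm1u'⟩
      · -- trivial option: u' = u''
        subst heq
        rcases Relation.ReflTransGen.cases_head hvu'' with heq2 | ⟨c, hvc, hcu''⟩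
        · exact absurd (heq2 ▸ hRm1u') hnot
        · exact ⟨c, hvc, hQmid c (taus_single hvc) hcu'', u'', k + m + 1,
            qpath_of_taus hcu'' (fun x hcx hx' =>
              hQmid x (taus_trans (taus_single hvc) hcx) hx'), hRm1u'⟩
  have stepL : ∀ v, Inv v → ∃ v', Tr v τ v' ∧ Q v' ∧ Inv v' := by
    rintro v ⟨w, k, hp, hR⟩
    cases hp with
    | refl => exact seg k v hR
    | head hab hQb hrest => exact ⟨_, hab, hQb, w, k, hrest, hR⟩
  -- initial invariant at t
  have hQall : ∀ x, Taus Tr τ t x → Taus Tr τ x u → Q x := fun x hx hx' =>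
    ⟨0, f 0, sp, tm, u, taus_refl, h2, taus_trans h3 hx, hx', hsu, h6⟩
  have hInvt : Inv t :=
    ⟨u, 0, qpath_of_taus (taus_trans h4 htpu) hQall, hsu⟩
  have hQt : Q t := hQall t taus_refl (taus_trans h4 htpu)
  -- build the infinite sequence by dependent choice
  choose next hnext1 hnext2 hnext3 using stepL
  let G : ℕ → {p : S // Q p ∧ Inv p} := fun n =>
    Nat.rec ⟨t, hQt, hInvt⟩ (fun _ p => ⟨next p.1 p.2.2, hnext2 p.1 p.2.2, hnext3 p.1 p.2.2⟩) n
  have hGstep : ∀ n, Tr (G n).1 τ (G (n + 1)).1 := fun n => hnext1 (G n).1 (G n).2.2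
  have hGQ : ∀ n, Q (G n).1 := fun n => (G n).2.1
  choose σ hσ using hGQ
  exact ⟨fun n => (G n).1, σ, rfl, hGstep, hσ⟩

/-- Composition of two relations. -/
lemma condT_comp {Tr : S → A → S → Prop} {τ : A} {R1 R2 : S → S → Prop}
    (hT1 : CondT Tr τ R1) (hT2 : CondT Tr τ R2) :
    CondT Tr τ (fun s r => ∃ t, R1 s t ∧ R2 t r) := by
  rintro s r a s' ⟨t, h1, h2⟩ hstep
  obtain ⟨t'', t', htt'', hopt, hst'', hs't'⟩ := hT1 _ _ _ _ h1 hstep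
  obtain ⟨r1, hrr1, hR2'⟩ := condT_taus hT2 htt'' r h2
  rcases hopt with hstep' | ⟨ha, he⟩
  · obtain ⟨r'', r', hr1r'', hopt', hR2'', hR2''2⟩ := hT2 _ _ _ _ hR2' hstep'
    exact ⟨r'', r', taus_trans hrr1 hr1r'', hopt', ⟨t'', hst'', hR2''⟩, ⟨t', hs't', hR2''2⟩⟩
  · subst he
    exact ⟨r1, r1, hrr1, Or.inr ⟨ha, rfl⟩, ⟨t'', hst'', hR2'⟩, ⟨t'', hs't', hR2'⟩⟩

lemma condD3_comp {Tr : S → A → S → Prop} {τ : A} {R1 R2 : S → S → Prop}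
    (hD1 : CondD3 Tr τ R1) (hD2 : CondD3 Tr τ R2) :
    CondD3 Tr τ (fun s r => ∃ t, R1 s t ∧ R2 t r) := by
  rintro s r f ⟨t, h1, h2⟩ hf0 hstep
  obtain ⟨g, σ1, hg0, hgstep, hgrel⟩ := hD1 s t f h1 hf0 hstep
  obtain ⟨h, σ2, hh0, hhstep, hhrel⟩ := hD2 t r g h2 hg0 hgstep
  exact ⟨h, fun m => σ1 (σ2 m), hh0, hhstep,
    fun m => ⟨g (σ2 m), hgrel (σ2 m), hhrel m⟩⟩

lemma condT_union {Tr : S → A → S → Prop} {τ : A} {R1 R2 : S → S → Prop}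
    (hT1 : CondT Tr τ R1) (hT2 : CondT Tr τ R2) :
    CondT Tr τ (fun s t => R1 s t ∨ R2 s t) := by
  rintro s t a s' (h | h) hstep
  · obtain ⟨t'', t', ht, hopt, hR, hR'⟩ := hT1 _ _ _ _ h hstep
    exact ⟨t'', t', ht, hopt, Or.inl hR, Or.inl hR'⟩
  · obtain ⟨t'', t', ht, hopt, hR, hR'⟩ := hT2 _ _ _ _ h hstep
    exact ⟨t'', t', ht, hopt, Or.inr hR, Or.inr hR'⟩

lemma condD3_union {Tr : S → A → S → Prop} {τ : A} {R1 R2 : S → S → Prop}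
    (hD1 : CondD3 Tr τ R1) (hD2 : CondD3 Tr τ R2) :
    CondD3 Tr τ (fun s t => R1 s t ∨ R2 s t) := by
  rintro s t f (h | h) hf0 hstep
  · obtain ⟨g, σ, hg0, hgstep, hgrel⟩ := hD1 s t f h hf0 hstep
    exact ⟨g, σ, hg0, hgstep, fun l => Or.inl (hgrel l)⟩
  · obtain ⟨g, σ, hg0, hgstep, hgrel⟩ := hD2 s t f h hf0 hstep
    exact ⟨g, σ, hg0, hgstep, fun l => Or.inr (hgrel l)⟩

lemma approx3_symm {Tr : S → A → S → Prop} {τ : A} : Symmetric (Approx3 Tr τ) := by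
  rintro s t ⟨R, hsym, hT, hD3, hst⟩
  exact ⟨R, hsym, hT, hD3, hsym hst⟩

lemma approx3_condT {Tr : S → A → S → Prop} {τ : A} : CondT Tr τ (Approx3 Tr τ) := by
  rintro s t a s' ⟨R, hsym, hT, hD3, hst⟩ hstep
  obtain ⟨t'', t', ht, hopt, hR, hR'⟩ := hT _ _ _ _ hst hstep
  exact ⟨t'', t', ht, hopt, ⟨R, hsym, hT, hD3, hR⟩, ⟨R, hsym, hT, hD3, hR'⟩⟩

lemma approx3_condD3 {Tr : S → A → S → Prop} {τ : A} : CondD3 Tr τ (Approx3 Tr τ) := by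
  rintro s t f ⟨R, hsym, hT, hD3, hst⟩ hf0 hstep
  obtain ⟨g, σ, hg0, hgstep, hgrel⟩ := hD3 s t f hst hf0 hstep
  exact ⟨g, σ, hg0, hgstep, fun l => ⟨R, hsym, hT, hD3, hgrel l⟩⟩

lemma approx3_trans {Tr : S → A → S → Prop} {τ : A} {s t r : S}
    (h1 : Approx3 Tr τ s t) (h2 : Approx3 Tr τ t r) : Approx3 Tr τ s r := by
  obtain ⟨R1, hsym1, hT1, hD31, h1⟩ := h1
  obtain ⟨R2, hsym2, hT2, hD32, h2⟩ := h2
  refine ⟨fun x y => (∃ z, R1 x z ∧ R2 z y) ∨ (∃ z, R2 x z ∧ R1 z y), ?_, ?_, ?_, ?_⟩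
  · rintro x y (⟨z, ha, hb⟩ | ⟨z, ha, hb⟩)
    · exact Or.inr ⟨z, hsym2 hb, hsym1 ha⟩
    · exact Or.inl ⟨z, hsym1 hb, hsym2 ha⟩
  · exact condT_union (condT_comp hT1 hT2) (condT_comp hT2 hT1)
  · exact condD3_union (condD3_comp hD31 hD32) (condD3_comp hD32 hD31)
  · exact Or.inl ⟨t, h1, h2⟩

lemma approx4_to_approx3 {Tr : S → A → S → Prop} {τ : A} {s t : S}
    (h : Approx4 Tr τ s t) : Approx3 Tr τ s t := by
  obtain ⟨R, hsym, hT, hD4, hst⟩ := h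
  exact ⟨StutClos Tr τ R, stutclos_symm hsym, stutclos_condT hT,
    stutclos_condD3 hT hD4, r_subset_stutclos hst⟩

lemma approx3_to_approx4 {Tr : S → A → S → Prop} {τ : A} {s t : S}
    (h : Approx3 Tr τ s t) : Approx4 Tr τ s t := by
  obtain ⟨R, hsym, hT, hD3, hst⟩ := h
  refine ⟨R, hsym, hT, ?_, hst⟩
  intro s t f hst' hf0 hstep _
  obtain ⟨g, σ, hg0, hgstep, hgrel⟩ := hD3 s t f hst' hf0 hstep
  exact ⟨g 1, σ 1, Relation.TransGen.single (hg0 ▸ hgstep 0), hgrel 1⟩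

end Aux

theorem approx4_eq_approx3 {S A : Type} (Tr : S → A → S → Prop) (τ : A) :
    (∀ s t : S, Approx4 Tr τ s t → Approx3 Tr τ s t) ∧
    (∀ s t : S, Approx4 Tr τ s t ↔ Approx3 Tr τ s t) ∧
    (∀ s t : S, BBED Tr τ s t ↔ Approx3 Tr τ s t) ∧
    (∀ s t : S, Approx1 Tr τ s t ↔ Approx3 Tr τ s t) ∧
    (∀ s t : S, Approx2 Tr τ s t ↔ Approx3 Tr τ s t) := by
  have h43 : ∀ s t : S, Approx4 Tr τ s t → Approx3 Tr τ s t := fun s t h =>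
    approx4_to_approx3 h
  have h14 : ∀ s t : S, Approx1 Tr τ s t → Approx4 Tr τ s t := by
    rintro s t ⟨R, hsym, hT, hD1, hst⟩
    refine ⟨R, hsym, hT, ?_, hst⟩
    intro s t f hst' hf0 hstep hall
    obtain ⟨t', k, h, hR⟩ := hD1 s t f hst' hf0 hstep hall
    exact ⟨t', k, Relation.TransGen.single h, hR⟩
  have h31 : ∀ s t : S, Approx3 Tr τ s t → Approx1 Tr τ s t := by
    rintro s t ⟨R, hsym, hT, hD3, hst⟩
    refine ⟨R, hsym, hT, ?_, hst⟩
    intro s t f hst' hf0 hstep _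
    obtain ⟨g, σ, hg0, hgstep, hgrel⟩ := hD3 s t f hst' hf0 hstep
    exact ⟨g 1, σ 1, hg0 ▸ hgstep 0, hgrel 1⟩
  refine ⟨h43, fun s t => ⟨h43 s t, fun h => approx3_to_approx4 h⟩, fun s t => ⟨?_, ?_⟩,
    fun s t => ⟨fun h => h43 s t (h14 s t h), h31 s t⟩, fun s t => ⟨?_, ?_⟩⟩
  · -- BBED → Approx3
    rintro ⟨R, hsym, hT, hD, hst⟩
    apply h43
    refine ⟨R, hsym, hT, ?_, hst⟩
    intro s t f hst' hf0 hstep hall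
    obtain ⟨g, hg0, hgstep, hrel⟩ := hD s t f hst' hf0 hstep hall
    exact ⟨g 1, 0, Relation.TransGen.single (hg0 ▸ hgstep 0), hrel 0 1⟩
  · -- Approx3 → BBED
    intro h
    refine ⟨Approx3 Tr τ, approx3_symm, approx3_condT, ?_, h⟩
    intro s t f hst hf0 hstep hall
    obtain ⟨g, σ, hg0, hgstep, hgrel⟩ := approx3_condD3 s t f hst hf0 hstep
    exact ⟨g, hg0, hgstep, fun k l =>
      approx3_trans (hall k) (approx3_trans (approx3_symm (hall (σ l))) (hgrel l))⟩
  · -- Approx2 → Approx3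
    rintro ⟨R, hsym, hT, hD2, hst⟩
    apply h43
    apply h14
    refine ⟨R, hsym, hT, ?_, hst⟩
    intro s t f hst' hf0 hstep _
    exact hD2 s t f hst' hf0 hstep
  · -- Approx3 → Approx2
    rintro ⟨R, hsym, hT, hD3, hst⟩
    refine ⟨R, hsym, hT, ?_, hst⟩
    intro s t f hst' hf0 hstep
    obtain ⟨g, σ, hg0, hgstep, hgrel⟩ := hD3 s t f hst' hf0 hstep
    exact ⟨g 1, σ 1, hg0 ▸ hgstep 0, hgrel 1⟩
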